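/- arXiv:math/0411045 — 4 statements merged into one kernel-verified Lean document; each statement's English description precedes it below -/
import Mathlib

section
/- Let k → A be a homomorphism of commutative rings, L₀ → L a morphism of (k,A)-Lie algebras (Lie–Rinehart algebras over A), and U₀ = U(L₀) → U(L) = U the induced morphism of enveloping algebras. Let M be a right U-module and N a left U₀-module. Then the natural right U₀-linear map σ : M ⊗_A N → M ⊗_A (U ⊗_{U₀} N), m ⊗ n ↦ m ⊗ (1 ⊗ n), satisfies the following universal property: for every right U-module P and every right U₀-linear map α : M ⊗_A N → P, there exists a unique right U-linear map β : M ⊗_A (U ⊗_{U₀} N) → P with β ∘ σ = α. -/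
open scoped TensorProduct
open MulOpposite

/-- A `(k,A)`-Lie algebra (Lie–Rinehart algebra): a `k`-Lie algebra `L` which is an
`A`-module, together with an `A`-linear anchor map `L → Der_k(A)` which is a morphism
of Lie algebras and satisfies the Leibniz rule. -/
class LieRinehart (k A L : Type) [CommRing k] [CommRing A] [Algebra k A]
    [LieRing L] [LieAlgebra k L] [Module A L] [IsScalarTower k A L] where
  anchor : L →ₗ[A] Derivation k A A
  anchor_lie : ∀ x y : L, anchor ⁅x, y⁆ = ⁅anchor x, anchor y⁆
  leibniz : ∀ (a : A) (x y : L), ⁅x, a • y⁆ = a • ⁅x, y⁆ + (anchor x a) • y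

/-- The action of an element of `L` on `A` through the anchor map. -/
def anch (k : Type) {A L : Type} [CommRing k] [CommRing A] [Algebra k A]
    [LieRing L] [LieAlgebra k L] [Module A L] [IsScalarTower k A L]
    [LieRinehart k A L] (x : L) (a : A) : A :=
  LieRinehart.anchor (k := k) x a

/-- A realization of the enveloping algebra `U(L)` of a Lie–Rinehart algebra `L` over
`(k,A)` : a `k`-algebra `U` with structure maps from `A` and `L`, satisfying the
defining relations of `U(L)` and its universal property. -/
structure EnvAlg (k A L U : Type) [CommRing k] [CommRing A] [Algebra k A]
    [LieRing L] [LieAlgebra k L] [Module A L] [IsScalarTower k A L]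
    [LieRinehart k A L] [Ring U] [Algebra k U] where
  ιA : A →ₐ[k] U
  ιL : L →ₗ[k] U
  commA : ∀ (x : L) (a : A), ιL x * ιA a = ιA a * ιL x + ιA (anch k x a)
  commL : ∀ x y : L, ιL x * ιL y = ιL y * ιL x + ιL ⁅x, y⁆
  smul_def : ∀ (a : A) (x : L), ιL (a • x) = ιA a * ιL x
  universal : ∀ (B : Type) [Ring B] [Algebra k B] (gA : A →ₐ[k] B) (gL : L →ₗ[k] B),
    (∀ (x : L) (a : A), gL x * gA a = gA a * gL x + gA (anch k x a)) →
    (∀ x y : L, gL x * gL y = gL y * gL x + gL ⁅x, y⁆) →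
    (∀ (a : A) (x : L), gL (a • x) = gA a * gL x) →
    ∃! h : U →ₐ[k] B, (∀ a, h (ιA a) = gA a) ∧ (∀ x, h (ιL x) = gL x)

/-- Left multiplication by an element of a (possibly noncommutative) algebra `U`
on a `U`-module, as a `k`-linear map. -/
def lact {k U M : Type} [CommRing k] [Ring U] [Algebra k U] [AddCommGroup M] [Module k M]
    [Module U M] [IsScalarTower k U M] (u : U) : M →ₗ[k] M where
  toFun m := u • m
  map_add' := smul_add u
  map_smul' c m := by
    try dsimp only
    rw [RingHom.id_apply, ← algebraMap_smul U c m, ← algebraMap_smul U c (u • m),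
      smul_smul, smul_smul, Algebra.commutes]

/-- A left `U(L)`-module structure on an `A`-module `M`, described equivalently as a flat
`L`-connection: an `A`-linear map `∇ : L → End_k(M)` satisfying the Leibniz rule and
preserving brackets. -/
structure LRConnection (k A L M : Type) [CommRing k] [CommRing A] [Algebra k A]
    [LieRing L] [LieAlgebra k L] [Module A L] [IsScalarTower k A L] [LieRinehart k A L]
    [AddCommGroup M] [Module k M] [Module A M] [IsScalarTower k A M] where
  nabla : L →ₗ[A] (M →ₗ[k] M)
  leibniz : ∀ (x : L) (a : A) (m : M), nabla x (a • m) = a • nabla x m + (anch k x a) • m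
  flat : ∀ x y : L, nabla ⁅x, y⁆ = nabla x ∘ₗ nabla y - nabla y ∘ₗ nabla x


/-- The relations defining `M ⊗_A (U ⊗_{U₀} N)` inside `M ⊗ₖ (U ⊗ₖ N)`, for `M` a right
`U`-module, `N` a left `U₀`-module, and `φ : U₀ → U` the morphism of enveloping algebras:
`A`-balancedness of the outer tensor and `U₀`-balancedness of the inner one. -/
def mixRel (k A L U₀ U M N : Type) [CommRing k] [CommRing A] [Algebra k A]
    [LieRing L] [LieAlgebra k L] [Module A L] [IsScalarTower k A L] [LieRinehart k A L]
    [Ring U₀] [Algebra k U₀] [Ring U] [Algebra k U]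
    [AddCommGroup M] [Module k M] [Module A M]
    [AddCommGroup N] [Module k N] [Module U₀ N]
    (e : EnvAlg k A L U) (φ : U₀ →ₐ[k] U) : Submodule k (M ⊗[k] (U ⊗[k] N)) :=
  Submodule.span k
    ({z | ∃ (a : A) (m : M) (u : U) (n : N),
        z = (a • m) ⊗ₜ[k] (u ⊗ₜ[k] n) - m ⊗ₜ[k] ((e.ιA a * u) ⊗ₜ[k] n)} ∪
     {z | ∃ (m : M) (u : U) (v : U₀) (n : N),
        z = m ⊗ₜ[k] ((u * φ v) ⊗ₜ[k] n) - m ⊗ₜ[k] (u ⊗ₜ[k] (v • n))})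

section AuxAdjoin
variable {k A L U : Type} [CommRing k] [CommRing A] [Algebra k A]
  [LieRing L] [LieAlgebra k L] [Module A L] [IsScalarTower k A L] [LieRinehart k A L]
  [Ring U] [Algebra k U] (e : EnvAlg k A L U)

theorem EnvAlg.adjoin_top : Algebra.adjoin k (Set.range e.ιA ∪ Set.range e.ιL) = ⊤ := by
  set S := Algebra.adjoin k (Set.range e.ιA ∪ Set.range e.ιL) with hS
  have hA : ∀ a, e.ιA a ∈ S := fun a => Algebra.subset_adjoin (Or.inl ⟨a, rfl⟩)
  have hLm : ∀ x, e.ιL x ∈ S := fun x => Algebra.subset_adjoin (Or.inr ⟨x, rfl⟩)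
  let gA : A →ₐ[k] S := (e.ιA).codRestrict S hA
  let gL : L →ₗ[k] S := LinearMap.codRestrict (Subalgebra.toSubmodule S) e.ιL hLm
  obtain ⟨h, ⟨hhA, hhL⟩, -⟩ := e.universal S gA gL
    (fun x a => Subtype.ext (e.commA x a))
    (fun x y => Subtype.ext (e.commL x y))
    (fun a x => Subtype.ext (e.smul_def a x))
  obtain ⟨h₀, -, huniq⟩ := e.universal U e.ιA e.ιL e.commA e.commL e.smul_def
  have h1 : S.val.comp h = AlgHom.id k U := by
    have e1 : S.val.comp h = h₀ := huniq _ ⟨fun a => by rw [AlgHom.comp_apply, hhA a]; rfl,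
      fun x => by rw [AlgHom.comp_apply, hhL x]; rfl⟩
    have e2 : AlgHom.id k U = h₀ := huniq _ ⟨fun a => rfl, fun x => rfl⟩
    rw [e1, e2]
  rw [eq_top_iff]
  intro u _
  have h2 : (S.val.comp h) u = u := by rw [h1]; rfl
  rw [← h2]
  exact (h u).2

theorem EnvAlg.induction {p : U → Prop}
    (hA : ∀ a, p (e.ιA a)) (hL : ∀ x, p (e.ιL x))
    (halg : ∀ c : k, p (algebraMap k U c))
    (hadd : ∀ u v, p u → p v → p (u + v))
    (hmul : ∀ u v, p u → p v → p (u * v)) (u : U) : p u := by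
  have hu : u ∈ Algebra.adjoin k (Set.range e.ιA ∪ Set.range e.ιL) := by
    rw [e.adjoin_top]; trivial
  exact Algebra.adjoin_induction (p := fun x _ => p x)
    (fun x hx => by rcases hx with ⟨a, rfl⟩ | ⟨y, rfl⟩; exacts [hA a, hL y])
    halg (fun x y _ _ => hadd x y) (fun x y _ _ => hmul x y) hu

end AuxAdjoin
noncomputable section MainAux
set_option linter.unusedSectionVars false
variable {k A L U U₀ : Type} [CommRing k] [CommRing A] [Algebra k A]
  [LieRing L] [LieAlgebra k L] [Module A L] [IsScalarTower k A L] [LieRinehart k A L]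
  [Ring U] [Algebra k U] [Ring U₀] [Algebra k U₀]
  {M N P : Type}
  [AddCommGroup M] [Module k M] [Module A M] [IsScalarTower k A M]
  [Module Uᵐᵒᵖ M] [IsScalarTower k Uᵐᵒᵖ M]
  [AddCommGroup N] [Module k N] [Module A N] [IsScalarTower k A N]
  [Module U₀ N] [IsScalarTower k U₀ N]
  [AddCommGroup P] [Module k P] [Module Uᵐᵒᵖ P] [IsScalarTower k Uᵐᵒᵖ P]
  (e : EnvAlg k A L U)

variable (M N P) in
/-- The submodule of `Hom_k(M ⊗_k N, P)` of maps that are "right `A`-linear" in the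
first slot. -/
def SUPW0 : Submodule k (M ⊗[k] N →ₗ[k] P) where
  carrier := {F | ∀ (a : A) (m : M) (n : N), F ((a • m) ⊗ₜ[k] n) = op (e.ιA a) • F (m ⊗ₜ[k] n)}
  add_mem' := fun {F G} hF hG a m n => by
    simp only [LinearMap.add_apply, hF a m n, hG a m n, smul_add]
  zero_mem' := fun a m n => by
    simp only [LinearMap.zero_apply, smul_zero]
  smul_mem' := fun c F hF a m n => by
    simp only [LinearMap.smul_apply, hF a m n]
    exact smul_comm c _ _

/-- The operator on `SUPW0` corresponding to right multiplication by `e.ιA a`. -/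
def SUPTA (a : A) : SUPW0 M N P e →ₗ[k] SUPW0 M N P e where
  toFun F := ⟨(F : M ⊗[k] N →ₗ[k] P) ∘ₗ LinearMap.rTensor N (lact a : M →ₗ[k] M),
    fun a' m n => by
      simp only [LinearMap.comp_apply, LinearMap.rTensor_tmul]
      show (F : M ⊗[k] N →ₗ[k] P) ((a • a' • m) ⊗ₜ[k] n) = _
      rw [smul_comm a a' m]
      exact F.2 a' (a • m) n⟩
  map_add' F G := Subtype.ext (LinearMap.add_comp _ _ _)
  map_smul' c F := Subtype.ext (LinearMap.smul_comp _ _ _)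

@[simp] theorem SUPTA_apply (a : A) (F : SUPW0 M N P e) (m : M) (n : N) :
    ((SUPTA e a F : SUPW0 M N P e) : M ⊗[k] N →ₗ[k] P) (m ⊗ₜ[k] n) =
      (F : M ⊗[k] N →ₗ[k] P) ((a • m) ⊗ₜ[k] n) := by
  simp [SUPTA, lact]

variable (hMA : ∀ (a : A) (m : M), op (e.ιA a) • m = a • m)

include hMA in
theorem SUPhM1 (x : L) (a : A) (m : M) :
    op (e.ιL x) • (a • m) = a • (op (e.ιL x) • m) - (anch k x a) • m := by
  have h1 : op (e.ιL x) • (a • m) = op (e.ιA a * e.ιL x) • m := by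
    rw [← hMA a m, smul_smul, ← op_mul]
  have h2 : a • (op (e.ιL x) • m) = op (e.ιL x * e.ιA a) • m := by
    rw [← hMA a _, smul_smul, ← op_mul]
  rw [h1, h2, e.commA x a, op_add, add_smul, hMA (anch k x a) m]
  abel

theorem SUPhP1 (x : L) (a : A) (F : M ⊗[k] N →ₗ[k] P) (hF : F ∈ SUPW0 M N P e)
    (m : M) (n : N) :
    op (e.ιL x) • F ((a • m) ⊗ₜ[k] n) =
      op (e.ιA a) • (op (e.ιL x) • F (m ⊗ₜ[k] n)) -
        op (e.ιA (anch k x a)) • F (m ⊗ₜ[k] n) := by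
  have hc : e.ιA a * e.ιL x = e.ιL x * e.ιA a - e.ιA (anch k x a) := by
    rw [e.commA x a]; abel
  rw [hF a m n, smul_smul, ← op_mul, hc, op_sub, sub_smul, op_mul, mul_smul]
include hMA in
theorem SUPTL_mem (x : L) (F : SUPW0 M N P e) :
    (F : M ⊗[k] N →ₗ[k] P) ∘ₗ LinearMap.rTensor N (lact (op (e.ιL x)) : M →ₗ[k] M) -
      (lact (op (e.ιL x)) : P →ₗ[k] P) ∘ₗ (F : M ⊗[k] N →ₗ[k] P) ∈ SUPW0 M N P e := by
  intro a m n
  simp only [LinearMap.sub_apply, LinearMap.comp_apply, LinearMap.rTensor_tmul]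
  show (F : M ⊗[k] N →ₗ[k] P) ((op (e.ιL x) • a • m) ⊗ₜ[k] n) -
      op (e.ιL x) • (F : M ⊗[k] N →ₗ[k] P) ((a • m) ⊗ₜ[k] n) =
    op (e.ιA a) • ((F : M ⊗[k] N →ₗ[k] P) ((op (e.ιL x) • m) ⊗ₜ[k] n) -
      op (e.ιL x) • (F : M ⊗[k] N →ₗ[k] P) (m ⊗ₜ[k] n))
  rw [SUPhM1 e hMA x a m, TensorProduct.sub_tmul, map_sub, F.2 a (op (e.ιL x) • m) n,
    F.2 (anch k x a) m n, SUPhP1 e x a _ F.2 m n, smul_sub]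
  abel

/-- The operator on `SUPW0` corresponding to the right action of `e.ιL x`. -/
def SUPTL (x : L) : SUPW0 M N P e →ₗ[k] SUPW0 M N P e where
  toFun F := ⟨(F : M ⊗[k] N →ₗ[k] P) ∘ₗ LinearMap.rTensor N (lact (op (e.ιL x)) : M →ₗ[k] M) -
      (lact (op (e.ιL x)) : P →ₗ[k] P) ∘ₗ (F : M ⊗[k] N →ₗ[k] P), SUPTL_mem e hMA x F⟩
  map_add' F G := Subtype.ext (by
    simp only [Submodule.coe_add, LinearMap.add_comp, LinearMap.comp_add]
    abel)
  map_smul' c F := Subtype.ext (by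
    simp only [RingHom.id_apply, SetLike.val_smul, LinearMap.smul_comp,
      LinearMap.comp_smul, smul_sub])

@[simp] theorem SUPTL_apply (x : L) (F : SUPW0 M N P e) (m : M) (n : N) :
    ((SUPTL e hMA x F : SUPW0 M N P e) : M ⊗[k] N →ₗ[k] P) (m ⊗ₜ[k] n) =
      (F : M ⊗[k] N →ₗ[k] P) ((op (e.ιL x) • m) ⊗ₜ[k] n) -
        op (e.ιL x) • (F : M ⊗[k] N →ₗ[k] P) (m ⊗ₜ[k] n) := by
  simp [SUPTL, lact]

/-- The `A`-part of the right `U`-action on `SUPW0`, as an algebra map. -/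
def SUPgA : A →ₐ[k] Module.End k (SUPW0 M N P e) where
  toFun a := SUPTA e a
  map_one' := LinearMap.ext fun F => Subtype.ext <| TensorProduct.ext' fun m n => by
    simp [Module.End.one_apply]
  map_mul' a b := LinearMap.ext fun F => Subtype.ext <| TensorProduct.ext' fun m n => by
    simp only [SUPTA_apply, Module.End.mul_apply, smul_smul, mul_comm a b]
  map_zero' := LinearMap.ext fun F => Subtype.ext <| TensorProduct.ext' fun m n => by
    simp
  map_add' a b := LinearMap.ext fun F => Subtype.ext <| TensorProduct.ext' fun m n => by
    simp only [SUPTA_apply, LinearMap.add_apply, Submodule.coe_add, add_smul,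
      TensorProduct.add_tmul, map_add]
  commutes' c := LinearMap.ext fun F => Subtype.ext <| TensorProduct.ext' fun m n => by
    simp only [SUPTA_apply, Module.algebraMap_end_apply, SetLike.val_smul,
      LinearMap.smul_apply, algebraMap_smul, ← TensorProduct.smul_tmul', map_smul]

/-- The `L`-part of the right `U`-action on `SUPW0`, as a `k`-linear map. -/
def SUPgL : L →ₗ[k] Module.End k (SUPW0 M N P e) where
  toFun x := SUPTL e hMA x
  map_add' x y := LinearMap.ext fun F => Subtype.ext <| TensorProduct.ext' fun m n => by
    simp only [SUPTL_apply, LinearMap.add_apply, Submodule.coe_add, map_add, op_add,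
      add_smul, TensorProduct.add_tmul, smul_add]
    abel
  map_smul' c x := LinearMap.ext fun F => Subtype.ext <| TensorProduct.ext' fun m n => by
    simp only [SUPTL_apply, RingHom.id_apply, LinearMap.smul_apply, SetLike.val_smul,
      map_smul, op_smul, smul_assoc, TensorProduct.smul_tmul', smul_sub]
    rw [← TensorProduct.smul_tmul', map_smul]
theorem SUPrel1 (x : L) (a : A) :
    SUPgL (M := M) (N := N) (P := P) e hMA x * SUPgA e a = SUPgA e a * SUPgL e hMA x + SUPgA e (anch k x a) := by
  refine LinearMap.ext fun F => Subtype.ext <| TensorProduct.ext' fun m n => ?_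
  simp only [Module.End.mul_apply, LinearMap.add_apply, Submodule.coe_add,
    SUPTL_apply, SUPTA_apply, SUPgA, SUPgL, AlgHom.coe_mk, RingHom.coe_mk, MonoidHom.coe_mk,
    OneHom.coe_mk, LinearMap.coe_mk, AddHom.coe_mk]
  rw [SUPhM1 e hMA x a m, TensorProduct.sub_tmul, map_sub]
  abel

theorem SUPrel2 (x y : L) :
    SUPgL (M := M) (N := N) (P := P) e hMA x * SUPgL e hMA y =
      SUPgL e hMA y * SUPgL e hMA x + SUPgL e hMA ⁅x, y⁆ := by
  have hsw : ∀ (u v : U) (m : M), op u • op v • m = op (v * u) • m := fun u v m => by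
    rw [smul_smul, ← op_mul]
  have hswP : ∀ (u v : U) (p : P), op u • op v • p = op (v * u) • p := fun u v p => by
    rw [smul_smul, ← op_mul]
  refine LinearMap.ext fun F => Subtype.ext <| TensorProduct.ext' fun m n => ?_
  simp only [Module.End.mul_apply, LinearMap.add_apply, Submodule.coe_add,
    SUPTL_apply, SUPgL, LinearMap.coe_mk, AddHom.coe_mk, map_sub, smul_sub]
  rw [hsw, hsw, hswP, hswP, e.commL x y, op_add, add_smul, add_smul, TensorProduct.add_tmul,
    map_add]
  abel

theorem SUPrel3 (a : A) (x : L) :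
    SUPgL (M := M) (N := N) (P := P) e hMA (a • x) = SUPgA e a * SUPgL e hMA x := by
  have hsw : ∀ (u v : U) (m : M), op u • op v • m = op (v * u) • m := fun u v m => by
    rw [smul_smul, ← op_mul]
  refine LinearMap.ext fun F => Subtype.ext <| TensorProduct.ext' fun m n => ?_
  simp only [Module.End.mul_apply, SUPTL_apply, SUPTA_apply, SUPgA, SUPgL, AlgHom.coe_mk,
    RingHom.coe_mk, MonoidHom.coe_mk, OneHom.coe_mk, LinearMap.coe_mk, AddHom.coe_mk]
  rw [e.smul_def a x, ← hsw (e.ιL x) (e.ιA a) m, hMA a m, op_mul, mul_smul, F.2 a m n]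

/-- The operator on `SUPW0` given by the left action of `v : U₀` on the `N` slot. -/
def SUPRv (v : U₀) : SUPW0 M N P e →ₗ[k] SUPW0 M N P e where
  toFun F := ⟨(F : M ⊗[k] N →ₗ[k] P) ∘ₗ LinearMap.lTensor M (lact v : N →ₗ[k] N),
    fun a m n => by
      simp only [LinearMap.comp_apply, LinearMap.lTensor_tmul]
      exact F.2 a m (v • n)⟩
  map_add' F G := Subtype.ext (LinearMap.add_comp _ _ _)
  map_smul' c F := Subtype.ext (LinearMap.smul_comp _ _ _)

@[simp] theorem SUPRv_apply (v : U₀) (F : SUPW0 M N P e) (m : M) (n : N) :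
    ((SUPRv e v F : SUPW0 M N P e) : M ⊗[k] N →ₗ[k] P) (m ⊗ₜ[k] n) =
      (F : M ⊗[k] N →ₗ[k] P) (m ⊗ₜ[k] (v • n)) := by
  simp [SUPRv, lact]


/-- The map `M ⊗ₖ N → P` induced by a `k`-linear map `α : M ⊗_A N → P`. -/
def SUPalphaK (α : M ⊗[A] N →ₗ[k] P) : M ⊗[k] N →ₗ[k] P :=
  TensorProduct.lift
    { toFun := fun m =>
        { toFun := fun n => α (m ⊗ₜ[A] n)
          map_add' := fun n n' => by rw [TensorProduct.tmul_add, map_add]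
          map_smul' := fun c n => by
            rw [RingHom.id_apply, ← algebraMap_smul A c n, ← TensorProduct.smul_tmul,
              algebraMap_smul, ← TensorProduct.smul_tmul', map_smul] }
      map_add' := fun m m' => LinearMap.ext fun n => by
        simp only [LinearMap.coe_mk, AddHom.coe_mk, LinearMap.add_apply]
        rw [TensorProduct.add_tmul, map_add]
      map_smul' := fun c m => LinearMap.ext fun n => by
        simp only [LinearMap.coe_mk, AddHom.coe_mk, RingHom.id_apply, LinearMap.smul_apply]
        rw [← TensorProduct.smul_tmul', map_smul] }

@[simp] theorem SUPalphaK_tmul (α : M ⊗[A] N →ₗ[k] P) (m : M) (n : N) :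
    SUPalphaK (M := M) (N := N) α (m ⊗ₜ[k] n) = α (m ⊗ₜ[A] n) := rfl

@[simp] theorem SUPgA_apply (a : A) (F : SUPW0 M N P e) : SUPgA e a F = SUPTA e a F := rfl

@[simp] theorem SUPgL_apply (x : L) (F : SUPW0 M N P e) :
    SUPgL e hMA x F = SUPTL e hMA x F := rfl

end MainAux
set_option maxHeartbeats 1000000 in
/-- universal property of `σ : M ⊗_A N → M ⊗_A (U ⊗_{U₀} N)`.
Let `L₀ → L` be a morphism of `(k,A)`-Lie algebras, `U₀ → U` the induced morphism of
enveloping algebras, `M` a right `U`-module and `N` a left `U₀`-module.  For every right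
`U`-module `P` and every right `U₀`-linear map `α : M ⊗_A N → P` there is a unique right
`U`-linear map `β : M ⊗_A (U ⊗_{U₀} N) → P` with `β ∘ σ = α`, where
`σ(m ⊗ n) = m ⊗ (1 ⊗ n)`.  (Right `U`-(resp. `U₀`-)linearity is expressed on the
algebra generators coming from `A` and `L` (resp. `L₀`).) -/
theorem sigma_universal_property
    (k A L₀ L U₀ U M N : Type) [CommRing k] [CommRing A] [Algebra k A]
    [LieRing L₀] [LieAlgebra k L₀] [Module A L₀] [IsScalarTower k A L₀] [LieRinehart k A L₀]
    [LieRing L] [LieAlgebra k L] [Module A L] [IsScalarTower k A L] [LieRinehart k A L]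
    [Ring U₀] [Algebra k U₀] [Ring U] [Algebra k U]
    (e₀ : EnvAlg k A L₀ U₀) (e : EnvAlg k A L U)
    -- a morphism of `(k,A)`-Lie algebras `f : L₀ → L`
    (f : L₀ →ₗ[A] L)
    (hf_lie : ∀ x y : L₀, f ⁅x, y⁆ = ⁅f x, f y⁆)
    (hf_anchor : ∀ (x : L₀) (a : A), anch k (f x) a = anch k x a)
    -- the induced morphism of enveloping algebras `φ : U₀ → U`
    (φ : U₀ →ₐ[k] U)
    (hφA : ∀ a : A, φ (e₀.ιA a) = e.ιA a)
    (hφL : ∀ x : L₀, φ (e₀.ιL x) = e.ιL (f x))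
    -- `M` is a right `U`-module, with compatible `A`-structure
    [AddCommGroup M] [Module k M] [Module A M] [IsScalarTower k A M]
    [Module Uᵐᵒᵖ M] [IsScalarTower k Uᵐᵒᵖ M]
    (hMA : ∀ (a : A) (m : M), op (e.ιA a) • m = a • m)
    -- `N` is a left `U₀`-module, with compatible `A`-structure
    [AddCommGroup N] [Module k N] [Module A N] [IsScalarTower k A N]
    [Module U₀ N] [IsScalarTower k U₀ N]
    (hNA : ∀ (a : A) (n : N), e₀.ιA a • n = a • n) :
    ∀ (P : Type) [AddCommGroup P] [Module k P] [Module Uᵐᵒᵖ P] [IsScalarTower k Uᵐᵒᵖ P],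
    ∀ α : M ⊗[A] N →ₗ[k] P,
    -- `α` is right `U₀`-linear (on the generators of `U₀`, acting through `φ` on `M ⊗ N`)
    (∀ (a : A) (m : M) (n : N),
      α ((a • m) ⊗ₜ[A] n) = op (e.ιA a) • α (m ⊗ₜ[A] n)) →
    (∀ (x : L₀) (m : M) (n : N),
      α ((op (e.ιL (f x)) • m) ⊗ₜ[A] n) - α (m ⊗ₜ[A] (e₀.ιL x • n)) =
        op (e.ιL (f x)) • α (m ⊗ₜ[A] n)) →
    ∃! β : (M ⊗[k] (U ⊗[k] N)) ⧸ mixRel k A L U₀ U M N e φ →ₗ[k] P,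
      -- `β ∘ σ = α`
      (∀ (m : M) (n : N),
        β (Submodule.Quotient.mk (m ⊗ₜ[k] ((1 : U) ⊗ₜ[k] n))) = α (m ⊗ₜ[A] n)) ∧
      -- `β` is right `U`-linear (on the generators of `U`)
      (∀ (a : A) (m : M) (u : U) (n : N),
        β (Submodule.Quotient.mk ((a • m) ⊗ₜ[k] (u ⊗ₜ[k] n))) =
          op (e.ιA a) • β (Submodule.Quotient.mk (m ⊗ₜ[k] (u ⊗ₜ[k] n)))) ∧
      (∀ (x : L) (m : M) (u : U) (n : N),
        β (Submodule.Quotient.mk ((op (e.ιL x) • m) ⊗ₜ[k] (u ⊗ₜ[k] n))) -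
          β (Submodule.Quotient.mk (m ⊗ₜ[k] ((e.ιL x * u) ⊗ₜ[k] n))) =
          op (e.ιL x) • β (Submodule.Quotient.mk (m ⊗ₜ[k] (u ⊗ₜ[k] n)))) := by
  intro P _ _ _ _ α hαA hαL
  have hmem : SUPalphaK (M := M) (N := N) α ∈ SUPW0 M N P e := fun a m n => by
    rw [SUPalphaK_tmul, SUPalphaK_tmul, hαA]
  set α₀ : SUPW0 M N P e := ⟨SUPalphaK α, hmem⟩ with hα₀
  obtain ⟨h, ⟨hhA, hhL⟩, -⟩ := e.universal (Module.End k (SUPW0 M N P e))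
    (SUPgA e) (SUPgL e hMA) (SUPrel1 e hMA) (SUPrel2 e hMA) (SUPrel3 e hMA)
  -- `h u` commutes with the right-translation operators `SUPRv`
  have L1 : ∀ (v : U₀) (u : U) (G : SUPW0 M N P e),
      h u (SUPRv e v G) = SUPRv e v (h u G) := by
    intro v u
    refine e.induction
      (p := fun u => ∀ G : SUPW0 M N P e, h u (SUPRv e v G) = SUPRv e v (h u G))
      ?_ ?_ ?_ ?_ ?_ u
    · intro a G
      rw [hhA]
      exact Subtype.ext (TensorProduct.ext' fun m n => by simp)
    · intro x G
      rw [hhL]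
      exact Subtype.ext (TensorProduct.ext' fun m n => by simp)
    · intro c G
      rw [h.commutes, Module.algebraMap_end_apply, Module.algebraMap_end_apply, map_smul]
    · intro u u' hu hu' G
      rw [map_add, LinearMap.add_apply, hu, hu', LinearMap.add_apply, map_add]
    · intro u u' hu hu' G
      rw [map_mul, Module.End.mul_apply, hu', hu, Module.End.mul_apply]
  -- the value of `h (φ v)` at `α₀`
  have L2 : ∀ v : U₀, h (φ v) α₀ = SUPRv e v α₀ := by
    intro v
    refine e₀.induction (p := fun v => h (φ v) α₀ = SUPRv e v α₀) ?_ ?_ ?_ ?_ ?_ v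
    · intro a
      rw [hφA, hhA]
      refine Subtype.ext (TensorProduct.ext' fun m n => ?_)
      simp only [SUPgA_apply, SUPTA_apply, SUPRv_apply, hα₀, SUPalphaK_tmul]
      rw [hNA, TensorProduct.smul_tmul]
    · intro x
      rw [hφL, hhL]
      refine Subtype.ext (TensorProduct.ext' fun m n => ?_)
      simp only [SUPgL_apply, SUPTL_apply, SUPRv_apply, hα₀, SUPalphaK_tmul]
      rw [← hαL x m n, sub_sub_cancel]
    · intro c
      rw [φ.commutes, h.commutes, Module.algebraMap_end_apply]
      refine Subtype.ext (TensorProduct.ext' fun m n => ?_)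
      simp only [SetLike.val_smul, LinearMap.smul_apply, SUPRv_apply]
      rw [algebraMap_smul, TensorProduct.tmul_smul, map_smul]
    · intro v w hv hw
      rw [map_add, map_add, LinearMap.add_apply, hv, hw]
      refine Subtype.ext (TensorProduct.ext' fun m n => ?_)
      simp only [Submodule.coe_add, LinearMap.add_apply, SUPRv_apply]
      rw [add_smul, TensorProduct.tmul_add, map_add]
    · intro v w hv hw
      rw [map_mul, map_mul, Module.End.mul_apply, hw, L1 w (φ v) α₀, hv]
      refine Subtype.ext (TensorProduct.ext' fun m n => ?_)
      simp only [SUPRv_apply]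
      rw [mul_smul]
  -- the candidate map on `M ⊗ₖ (U ⊗ₖ N)`
  let ψ : U →ₗ[k] (M ⊗[k] N →ₗ[k] P) :=
    { toFun := fun u => ((h u α₀ : SUPW0 M N P e) : M ⊗[k] N →ₗ[k] P)
      map_add' := fun u v => by rw [map_add, LinearMap.add_apply]; rfl
      map_smul' := fun c u => by
        rw [RingHom.id_apply, show h (c • u) = c • h u from map_smul h.toLinearMap c u,
          LinearMap.smul_apply]
        rfl }
  let βt : M ⊗[k] (U ⊗[k] N) →ₗ[k] P :=
    (TensorProduct.lift ψ) ∘ₗ (TensorProduct.leftComm k M U N).toLinearMap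
  have hβt : ∀ (m : M) (u : U) (n : N),
      βt (m ⊗ₜ[k] (u ⊗ₜ[k] n)) =
        ((h u α₀ : SUPW0 M N P e) : M ⊗[k] N →ₗ[k] P) (m ⊗ₜ[k] n) := by
    intro m u n
    simp only [βt, ψ, LinearMap.comp_apply, LinearEquiv.coe_coe,
      TensorProduct.leftComm_tmul, TensorProduct.lift.tmul, LinearMap.coe_mk, AddHom.coe_mk]
  have hker : mixRel k A L U₀ U M N e φ ≤ LinearMap.ker βt := by
    rw [mixRel, Submodule.span_le]
    rintro z (⟨a, m, u, n, rfl⟩ | ⟨m, u, v, n, rfl⟩)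
    · rw [SetLike.mem_coe, LinearMap.mem_ker, map_sub, hβt, hβt]
      have hmul : h (e.ιA a * u) α₀ = SUPTA e a (h u α₀) := by
        rw [map_mul, hhA, Module.End.mul_apply, SUPgA_apply]
      rw [hmul, SUPTA_apply, sub_self]
    · rw [SetLike.mem_coe, LinearMap.mem_ker, map_sub, hβt, hβt]
      have hmul : h (u * φ v) α₀ = SUPRv e v (h u α₀) := by
        rw [map_mul, Module.End.mul_apply, L2 v, L1 v u α₀]
      rw [hmul, SUPRv_apply, sub_self]
  set β : (M ⊗[k] (U ⊗[k] N)) ⧸ mixRel k A L U₀ U M N e φ →ₗ[k] P :=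
    Submodule.liftQ _ βt hker with hβdef
  have hc1 : ∀ (m : M) (n : N),
      β (Submodule.Quotient.mk (m ⊗ₜ[k] ((1 : U) ⊗ₜ[k] n))) = α (m ⊗ₜ[A] n) := by
    intro m n
    rw [hβdef, Submodule.liftQ_apply, hβt, map_one, Module.End.one_apply]
    exact SUPalphaK_tmul α m n
  have hc2 : ∀ (a : A) (m : M) (u : U) (n : N),
      β (Submodule.Quotient.mk ((a • m) ⊗ₜ[k] (u ⊗ₜ[k] n))) =
        op (e.ιA a) • β (Submodule.Quotient.mk (m ⊗ₜ[k] (u ⊗ₜ[k] n))) := by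
    intro a m u n
    rw [hβdef, Submodule.liftQ_apply, Submodule.liftQ_apply, hβt, hβt]
    exact (h u α₀).2 a m n
  have hc3 : ∀ (x : L) (m : M) (u : U) (n : N),
      β (Submodule.Quotient.mk ((op (e.ιL x) • m) ⊗ₜ[k] (u ⊗ₜ[k] n))) -
        β (Submodule.Quotient.mk (m ⊗ₜ[k] ((e.ιL x * u) ⊗ₜ[k] n))) =
        op (e.ιL x) • β (Submodule.Quotient.mk (m ⊗ₜ[k] (u ⊗ₜ[k] n))) := by
    intro x m u n
    rw [hβdef, Submodule.liftQ_apply, Submodule.liftQ_apply, Submodule.liftQ_apply,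
      hβt, hβt, hβt]
    have hmul : h (e.ιL x * u) α₀ = SUPTL e hMA x (h u α₀) := by
      rw [map_mul, hhL, Module.End.mul_apply, SUPgL_apply]
    rw [hmul, SUPTL_apply, sub_sub_cancel]
  refine ⟨β, ⟨hc1, hc2, hc3⟩, ?_⟩
  rintro β' ⟨c1, c2, c3⟩
  apply LinearMap.ext
  intro z
  obtain ⟨z, rfl⟩ := Submodule.Quotient.mk_surjective _ z
  have key : ∀ u v : U,
      (∀ (m : M) (n : N), β' (Submodule.Quotient.mk (m ⊗ₜ[k] (v ⊗ₜ[k] n))) =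
        β (Submodule.Quotient.mk (m ⊗ₜ[k] (v ⊗ₜ[k] n)))) →
      ∀ (m : M) (n : N), β' (Submodule.Quotient.mk (m ⊗ₜ[k] ((u * v) ⊗ₜ[k] n))) =
        β (Submodule.Quotient.mk (m ⊗ₜ[k] ((u * v) ⊗ₜ[k] n))) := by
    intro u
    refine e.induction (p := fun u => ∀ v : U,
      (∀ (m : M) (n : N), β' (Submodule.Quotient.mk (m ⊗ₜ[k] (v ⊗ₜ[k] n))) =
        β (Submodule.Quotient.mk (m ⊗ₜ[k] (v ⊗ₜ[k] n)))) →
      ∀ (m : M) (n : N), β' (Submodule.Quotient.mk (m ⊗ₜ[k] ((u * v) ⊗ₜ[k] n))) =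
        β (Submodule.Quotient.mk (m ⊗ₜ[k] ((u * v) ⊗ₜ[k] n)))) ?_ ?_ ?_ ?_ ?_ u
    · intro a v hv m n
      have hq : (Submodule.Quotient.mk ((a • m) ⊗ₜ[k] (v ⊗ₜ[k] n)) :
            (M ⊗[k] (U ⊗[k] N)) ⧸ mixRel k A L U₀ U M N e φ) =
          Submodule.Quotient.mk (m ⊗ₜ[k] ((e.ιA a * v) ⊗ₜ[k] n)) :=
        (Submodule.Quotient.eq _).mpr (Submodule.subset_span (Or.inl ⟨a, m, v, n, rfl⟩))
      rw [← hq]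
      exact hv (a • m) n
    · intro x v hv m n
      have h1 : β' (Submodule.Quotient.mk (m ⊗ₜ[k] ((e.ιL x * v) ⊗ₜ[k] n))) =
          β' (Submodule.Quotient.mk ((op (e.ιL x) • m) ⊗ₜ[k] (v ⊗ₜ[k] n))) -
            op (e.ιL x) • β' (Submodule.Quotient.mk (m ⊗ₜ[k] (v ⊗ₜ[k] n))) := by
        rw [← c3 x m v n, sub_sub_cancel]
      have h2 : β (Submodule.Quotient.mk (m ⊗ₜ[k] ((e.ιL x * v) ⊗ₜ[k] n))) =
          β (Submodule.Quotient.mk ((op (e.ιL x) • m) ⊗ₜ[k] (v ⊗ₜ[k] n))) -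
            op (e.ιL x) • β (Submodule.Quotient.mk (m ⊗ₜ[k] (v ⊗ₜ[k] n))) := by
        rw [← hc3 x m v n, sub_sub_cancel]
      rw [h1, h2, hv (op (e.ιL x) • m) n, hv m n]
    · intro c v hv m n
      rw [← Algebra.smul_def c v, ← TensorProduct.smul_tmul', TensorProduct.tmul_smul,
        Submodule.Quotient.mk_smul, map_smul, map_smul, hv m n]
    · intro u u' hu hu' v hv m n
      rw [add_mul, TensorProduct.add_tmul, TensorProduct.tmul_add,
        Submodule.Quotient.mk_add, map_add, map_add, hu v hv m n, hu' v hv m n]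
    · intro u u' hu hu' v hv m n
      rw [mul_assoc]
      exact hu (u' * v) (hu' v hv) m n
  have base : ∀ (m : M) (n : N),
      β' (Submodule.Quotient.mk (m ⊗ₜ[k] ((1 : U) ⊗ₜ[k] n))) =
        β (Submodule.Quotient.mk (m ⊗ₜ[k] ((1 : U) ⊗ₜ[k] n))) := fun m n => by
    rw [c1 m n, hc1 m n]
  have pure : ∀ (u : U) (m : M) (n : N),
      β' (Submodule.Quotient.mk (m ⊗ₜ[k] (u ⊗ₜ[k] n))) =
        β (Submodule.Quotient.mk (m ⊗ₜ[k] (u ⊗ₜ[k] n))) := fun u m n => by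
    simpa only [mul_one] using key u 1 base m n
  induction z using TensorProduct.induction_on with
  | zero => rw [Submodule.Quotient.mk_zero, map_zero, map_zero]
  | tmul m w =>
      induction w using TensorProduct.induction_on with
      | zero => rw [TensorProduct.tmul_zero, Submodule.Quotient.mk_zero, map_zero, map_zero]
      | tmul u n => exact pure u m n
      | add w1 w2 h1 h2 =>
          rw [TensorProduct.tmul_add, Submodule.Quotient.mk_add, map_add, map_add, h1, h2]
  | add z1 z2 h1 h2 =>
      rw [Submodule.Quotient.mk_add, map_add, map_add, h1, h2]
end

section
/- (Commutation lemma.) Let U = U(L) be the enveloping algebra of a (k,A)-Lie algebra L. For elements t_i = a_i + λ_i (a_i ∈ A, λ_i ∈ L) with i in I_r = {1,…,r}, a ∈ A, and E ⊆ I_r, one has in U: a·t_E = Σ_{E'⊆E} (−1)^{#(E−E')} t_{E'} · λ_{E−E'}(a), where for E = {i₁ < … < i_l} we set t_E = t_{i₁}⋯t_{i_l}, λ_E = λ_{i_l}λ_{i_{l−1}}⋯λ_{i₁} (product in reverse order) acting on A by λ_E(a) = λ_{i_l}(λ_{i_{l−1}}(⋯λ_{i₁}(a)⋯)). -/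
open scoped TensorProduct
open MulOpposite

section CommutationLemma

variable {k A L U : Type} [CommRing k] [CommRing A] [Algebra k A]
  [LieRing L] [LieAlgebra k L] [Module A L] [IsScalarTower k A L] [LieRinehart k A L]
  [Ring U] [Algebra k U]

/-- For `E = {i₁ < … < i_l} ⊆ {1,…,r}`, the product `t_E = t_{i₁} ⋯ t_{i_l}` in `U`,
where `t_i = a_i + λ_i`. -/
def tProd (e : EnvAlg k A L U) {r : ℕ} (a : Fin r → A) (lam : Fin r → L)
    (E : Finset (Fin r)) : U :=
  ((E.sort (· ≤ ·)).map fun i => e.ιA (a i) + e.ιL (lam i)).prod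

/-- For `E = {i₁ < … < i_l}`, the product `λ_E = λ_{i_l} λ_{i_{l-1}} ⋯ λ_{i₁}` in `U`
(product taken in reverse order). -/
def lamProd (e : EnvAlg k A L U) {r : ℕ} (lam : Fin r → L) (E : Finset (Fin r)) : U :=
  ((E.sort (· ≤ ·)).reverse.map fun i => e.ιL (lam i)).prod

/-- For `E = {i₁ < … < i_l}`, the iterated action
`λ_E(a) = λ_{i_l}(λ_{i_{l-1}}(⋯ λ_{i₁}(a) ⋯))` of the derivations `λ_i` on `a ∈ A`
(applied in increasing order of the indices). -/
def lamApp {r : ℕ} (lam : Fin r → L) (E : Finset (Fin r)) (a : A) : A :=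
  (E.sort (· ≤ ·)).foldl (fun b i => anch k (lam i) b) a

end CommutationLemma

section AuxLemmas

variable {k A L U : Type} [CommRing k] [CommRing A] [Algebra k A]
  [LieRing L] [LieAlgebra k L] [Module A L] [IsScalarTower k A L] [LieRinehart k A L]
  [Ring U] [Algebra k U]

lemma tProd_empty (e : EnvAlg k A L U) {r : ℕ} (a : Fin r → A) (lam : Fin r → L) :
    tProd e a lam ∅ = 1 := by simp [tProd]

lemma tProd_insert (e : EnvAlg k A L U) {r : ℕ} (a : Fin r → A) (lam : Fin r → L)
    {i : Fin r} {s : Finset (Fin r)} (h : ∀ x ∈ s, i < x) :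
    tProd e a lam (insert i s) = (e.ιA (a i) + e.ιL (lam i)) * tProd e a lam s := by
  have hns : i ∉ s := fun hi => lt_irrefl i (h i hi)
  rw [tProd, Finset.sort_insert _ (fun b hb => (h b hb).le) hns]
  simp [tProd]

lemma lamApp_empty {r : ℕ} (lam : Fin r → L) (a : A) :
    lamApp (k := k) lam ∅ a = a := by simp [lamApp]

lemma lamApp_insert {r : ℕ} (lam : Fin r → L) {i : Fin r} {s : Finset (Fin r)}
    (h : ∀ x ∈ s, i < x) (a : A) :
    lamApp (k := k) lam (insert i s) a = lamApp (k := k) lam s (anch k (lam i) a) := by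
  have hns : i ∉ s := fun hi => lt_irrefl i (h i hi)
  rw [lamApp, Finset.sort_insert _ (fun b hb => (h b hb).le) hns]
  rfl

end AuxLemmas

/-- commutation lemma.  In the enveloping algebra `U = U(L)` of a
`(k,A)`-Lie algebra `L`, for `t_i = a_i + λ_i` (`i ∈ I_r`), `a ∈ A` and `E ⊆ I_r`:
`a · t_E = Σ_{E' ⊆ E} (−1)^{#(E−E')} t_{E'} · λ_{E−E'}(a)`. -/
theorem commutation_lemma
    (k A L U : Type) [CommRing k] [CommRing A] [Algebra k A]
    [LieRing L] [LieAlgebra k L] [Module A L] [IsScalarTower k A L] [LieRinehart k A L]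
    [Ring U] [Algebra k U] (e : EnvAlg k A L U)
    (r : ℕ) (a' : Fin r → A) (lam : Fin r → L) (a : A) (E : Finset (Fin r)) :
    e.ιA a * tProd e a' lam E =
      ∑ E' ∈ E.powerset,
        ((-1 : ℤ) ^ (E.card - E'.card)) •
          (tProd e a' lam E' * e.ιA (lamApp (k := k) lam (E \ E') a)) := by
  induction E using Finset.induction_on_min generalizing a with
  | empty => simp [tProd_empty, lamApp_empty]
  | insert i s hlt ih =>
    have hns : i ∉ s := fun hi => lt_irrefl i (hlt i hi)
    have hcard : (insert i s).card = s.card + 1 := Finset.card_insert_of_notMem hns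
    -- key commutation for a single t_i
    have key : e.ιA a * (e.ιA (a' i) + e.ιL (lam i)) =
        (e.ιA (a' i) + e.ιL (lam i)) * e.ιA a - e.ιA (anch k (lam i) a) := by
      have h1 : e.ιL (lam i) * e.ιA a =
          e.ιA a * e.ιL (lam i) + e.ιA (anch k (lam i) a) := e.commA (lam i) a
      have h2 : e.ιA a * e.ιA (a' i) = e.ιA (a' i) * e.ιA a := by
        rw [← map_mul, ← map_mul, mul_comm]
      rw [mul_add, add_mul, h1, h2]
      abel
    rw [tProd_insert e a' lam hlt, Finset.sum_powerset_insert hns, ← mul_assoc, key,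
      sub_mul, mul_assoc, ih a, ih (anch k (lam i) a)]
    have e1 : ∑ E' ∈ s.powerset,
        ((-1 : ℤ) ^ ((insert i s).card - E'.card)) •
          (tProd e a' lam E' * e.ιA (lamApp (k := k) lam (insert i s \ E') a)) =
        - ∑ E' ∈ s.powerset,
        ((-1 : ℤ) ^ (s.card - E'.card)) •
          (tProd e a' lam E' * e.ιA (lamApp (k := k) lam (s \ E') (anch k (lam i) a))) := by
      rw [← Finset.sum_neg_distrib]
      refine Finset.sum_congr rfl fun E' hE' => ?_
      rw [Finset.mem_powerset] at hE'
      have hiE' : i ∉ E' := fun hi => hns (hE' hi)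
      have hsd : insert i s \ E' = insert i (s \ E') := by
        ext x
        simp only [Finset.mem_sdiff, Finset.mem_insert]
        constructor
        · rintro ⟨h1 | h1, h2⟩
          · exact Or.inl h1
          · exact Or.inr ⟨h1, h2⟩
        · rintro (rfl | ⟨h1, h2⟩)
          · exact ⟨Or.inl rfl, hiE'⟩
          · exact ⟨Or.inr h1, h2⟩
      have hlt' : ∀ x ∈ s \ E', i < x := fun x hx =>
        hlt x (Finset.mem_sdiff.mp hx).1
      rw [hsd, lamApp_insert (k := k) lam hlt', hcard,
        Nat.succ_sub (Finset.card_le_card hE'), pow_succ, mul_smul, neg_one_zsmul, smul_neg]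
    have e2 : ∑ E' ∈ s.powerset,
        ((-1 : ℤ) ^ ((insert i s).card - (insert i E').card)) •
          (tProd e a' lam (insert i E') *
            e.ιA (lamApp (k := k) lam (insert i s \ insert i E') a)) =
        (e.ιA (a' i) + e.ιL (lam i)) * ∑ E' ∈ s.powerset,
        ((-1 : ℤ) ^ (s.card - E'.card)) •
          (tProd e a' lam E' * e.ιA (lamApp (k := k) lam (s \ E') a)) := by
      rw [Finset.mul_sum]
      refine Finset.sum_congr rfl fun E' hE' => ?_
      rw [Finset.mem_powerset] at hE'
      have hiE' : i ∉ E' := fun hi => hns (hE' hi)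
      have hltE' : ∀ x ∈ E', i < x := fun x hx => hlt x (hE' hx)
      have hcard' : (insert i E').card = E'.card + 1 :=
        Finset.card_insert_of_notMem hiE'
      have hsd : insert i s \ insert i E' = s \ E' := by
        ext x
        simp only [Finset.mem_sdiff, Finset.mem_insert, not_or]
        constructor
        · rintro ⟨h1 | h1, h2, h3⟩
          · exact absurd h1 h2
          · exact ⟨h1, h3⟩
        · rintro ⟨h1, h2⟩
          exact ⟨Or.inr h1, fun h => hns (h ▸ h1), h2⟩
      rw [hsd, tProd_insert e a' lam hltE', hcard, hcard',
        Nat.succ_sub_succ, mul_smul_comm, mul_assoc]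
    rw [e1, e2]
    abel
end

section
/- Let L be a (k,A)-Lie algebra with enveloping algebra U. Let P be a right U-module and M, N left U-modules. Then the map p ⊗ (m ⊗ n) ↦ (p ⊗ m) ⊗ n is well defined and gives a k-linear isomorphism P ⊗_U (M ⊗_A N) ≅ (P ⊗_A M) ⊗_U N. -/
open scoped TensorProduct
open MulOpposite

/-- The relations defining `P ⊗_U (M ⊗_A N)` inside `P ⊗ₖ (M ⊗ₖ N)`, for `P` a right
`U`-module and `M`, `N` left `U`-modules (`M ⊗_A N` carrying the diagonal left
`U`-action): `U`-balancedness is expressed on the algebra generators of `U`. -/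
def relP_MN (k A L U P M N : Type) [CommRing k] [CommRing A] [Algebra k A]
    [LieRing L] [LieAlgebra k L] [Module A L] [IsScalarTower k A L] [LieRinehart k A L]
    [Ring U] [Algebra k U]
    [AddCommGroup P] [Module k P] [Module Uᵐᵒᵖ P]
    [AddCommGroup M] [Module k M] [Module A M] [Module U M]
    [AddCommGroup N] [Module k N] [Module A N] [Module U N]
    (e : EnvAlg k A L U) : Submodule k (P ⊗[k] (M ⊗[k] N)) :=
  Submodule.span k
    ({z | ∃ (a : A) (p : P) (m : M) (n : N),
        z = (op (e.ιA a) • p) ⊗ₜ[k] (m ⊗ₜ[k] n) - p ⊗ₜ[k] ((a • m) ⊗ₜ[k] n)} ∪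
     {z | ∃ (a : A) (p : P) (m : M) (n : N),
        z = p ⊗ₜ[k] ((a • m) ⊗ₜ[k] n) - p ⊗ₜ[k] (m ⊗ₜ[k] (a • n))} ∪
     {z | ∃ (x : L) (p : P) (m : M) (n : N),
        z = (op (e.ιL x) • p) ⊗ₜ[k] (m ⊗ₜ[k] n) - p ⊗ₜ[k] ((e.ιL x • m) ⊗ₜ[k] n)
            - p ⊗ₜ[k] (m ⊗ₜ[k] (e.ιL x • n))})

/-- The relations defining `(P ⊗_A M) ⊗_U N` inside `(P ⊗ₖ M) ⊗ₖ N`, for `P` a right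
`U`-module and `M`, `N` left `U`-modules (`P ⊗_A M` carrying the mixed right
`U`-action `(p ⊗ m)·λ = pλ ⊗ m − p ⊗ λm`): `U`-balancedness is expressed on the
algebra generators of `U`. -/
def relPM_N (k A L U P M N : Type) [CommRing k] [CommRing A] [Algebra k A]
    [LieRing L] [LieAlgebra k L] [Module A L] [IsScalarTower k A L] [LieRinehart k A L]
    [Ring U] [Algebra k U]
    [AddCommGroup P] [Module k P] [Module A P] [Module Uᵐᵒᵖ P]
    [AddCommGroup M] [Module k M] [Module A M] [Module U M]
    [AddCommGroup N] [Module k N] [Module A N] [Module U N]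
    (e : EnvAlg k A L U) : Submodule k ((P ⊗[k] M) ⊗[k] N) :=
  Submodule.span k
    ({z | ∃ (a : A) (p : P) (m : M) (n : N),
        z = ((a • p) ⊗ₜ[k] m) ⊗ₜ[k] n - (p ⊗ₜ[k] (a • m)) ⊗ₜ[k] n} ∪
     {z | ∃ (a : A) (p : P) (m : M) (n : N),
        z = ((a • p) ⊗ₜ[k] m) ⊗ₜ[k] n - (p ⊗ₜ[k] m) ⊗ₜ[k] (a • n)} ∪
     {z | ∃ (x : L) (p : P) (m : M) (n : N),
        z = ((op (e.ιL x) • p) ⊗ₜ[k] m) ⊗ₜ[k] n - (p ⊗ₜ[k] (e.ιL x • m)) ⊗ₜ[k] n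
            - (p ⊗ₜ[k] m) ⊗ₜ[k] (e.ιL x • n)})

/-- Let `L` be a `(k,A)`-Lie algebra with enveloping algebra `U`,
`P` a right `U`-module and `M`, `N` left `U`-modules.  The map
`p ⊗ (m ⊗ n) ↦ (p ⊗ m) ⊗ n` is well defined and gives a `k`-linear isomorphism
`P ⊗_U (M ⊗_A N) ≅ (P ⊗_A M) ⊗_U N`, where `M ⊗_A N` carries the diagonal left
`U`-action and `P ⊗_A M` the mixed right `U`-action. -/
theorem mixed_tensor_shift
    (k A L U P M N : Type) [CommRing k] [CommRing A] [Algebra k A]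
    [LieRing L] [LieAlgebra k L] [Module A L] [IsScalarTower k A L] [LieRinehart k A L]
    [Ring U] [Algebra k U] (e : EnvAlg k A L U)
    [AddCommGroup P] [Module k P] [Module A P] [IsScalarTower k A P]
    [Module Uᵐᵒᵖ P] [IsScalarTower k Uᵐᵒᵖ P]
    (hPA : ∀ (a : A) (p : P), op (e.ιA a) • p = a • p)
    [AddCommGroup M] [Module k M] [Module A M] [IsScalarTower k A M]
    [Module U M] [IsScalarTower k U M]
    (hMA : ∀ (a : A) (m : M), e.ιA a • m = a • m)
    [AddCommGroup N] [Module k N] [Module A N] [IsScalarTower k A N]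
    [Module U N] [IsScalarTower k U N]
    (hNA : ∀ (a : A) (n : N), e.ιA a • n = a • n) :
    ∃ (F₀ : (P ⊗[k] (M ⊗[k] N)) →ₗ[k] ((P ⊗[k] M) ⊗[k] N))
      (hc : relP_MN k A L U P M N e ≤ (relPM_N k A L U P M N e).comap F₀),
      (∀ (p : P) (m : M) (n : N),
        F₀ (p ⊗ₜ[k] (m ⊗ₜ[k] n)) - (p ⊗ₜ[k] m) ⊗ₜ[k] n ∈ relPM_N k A L U P M N e) ∧
      Function.Bijective
        (Submodule.mapQ (relP_MN k A L U P M N e) (relPM_N k A L U P M N e) F₀ hc) := by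
  classical
  set F : (P ⊗[k] (M ⊗[k] N)) →ₗ[k] ((P ⊗[k] M) ⊗[k] N) :=
    (TensorProduct.assoc k P M N).symm.toLinearMap with hF
  set G : ((P ⊗[k] M) ⊗[k] N) →ₗ[k] (P ⊗[k] (M ⊗[k] N)) :=
    (TensorProduct.assoc k P M N).toLinearMap with hG
  have hFt : ∀ (p : P) (m : M) (n : N), F (p ⊗ₜ[k] (m ⊗ₜ[k] n)) = (p ⊗ₜ[k] m) ⊗ₜ[k] n := by
    intro p m n; simp [hF]
  have hGt : ∀ (p : P) (m : M) (n : N), G ((p ⊗ₜ[k] m) ⊗ₜ[k] n) = p ⊗ₜ[k] (m ⊗ₜ[k] n) := by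
    intro p m n; simp [hG]
  -- membership lemmas for relPM_N generators
  have mem1 : ∀ (a : A) (p : P) (m : M) (n : N),
      ((a • p) ⊗ₜ[k] m) ⊗ₜ[k] n - (p ⊗ₜ[k] (a • m)) ⊗ₜ[k] n ∈ relPM_N k A L U P M N e := by
    intro a p m n
    exact Submodule.subset_span (Or.inl (Or.inl ⟨a, p, m, n, rfl⟩))
  have mem2 : ∀ (a : A) (p : P) (m : M) (n : N),
      ((a • p) ⊗ₜ[k] m) ⊗ₜ[k] n - (p ⊗ₜ[k] m) ⊗ₜ[k] (a • n) ∈ relPM_N k A L U P M N e := by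
    intro a p m n
    exact Submodule.subset_span (Or.inl (Or.inr ⟨a, p, m, n, rfl⟩))
  have mem3 : ∀ (x : L) (p : P) (m : M) (n : N),
      ((op (e.ιL x) • p) ⊗ₜ[k] m) ⊗ₜ[k] n - (p ⊗ₜ[k] (e.ιL x • m)) ⊗ₜ[k] n
        - (p ⊗ₜ[k] m) ⊗ₜ[k] (e.ιL x • n) ∈ relPM_N k A L U P M N e := by
    intro x p m n
    exact Submodule.subset_span (Or.inr ⟨x, p, m, n, rfl⟩)
  have mem1' : ∀ (a : A) (p : P) (m : M) (n : N),
      (op (e.ιA a) • p) ⊗ₜ[k] (m ⊗ₜ[k] n) - p ⊗ₜ[k] ((a • m) ⊗ₜ[k] n)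
        ∈ relP_MN k A L U P M N e := by
    intro a p m n
    exact Submodule.subset_span (Or.inl (Or.inl ⟨a, p, m, n, rfl⟩))
  have mem2' : ∀ (a : A) (p : P) (m : M) (n : N),
      p ⊗ₜ[k] ((a • m) ⊗ₜ[k] n) - p ⊗ₜ[k] (m ⊗ₜ[k] (a • n)) ∈ relP_MN k A L U P M N e := by
    intro a p m n
    exact Submodule.subset_span (Or.inl (Or.inr ⟨a, p, m, n, rfl⟩))
  have mem3' : ∀ (x : L) (p : P) (m : M) (n : N),
      (op (e.ιL x) • p) ⊗ₜ[k] (m ⊗ₜ[k] n) - p ⊗ₜ[k] ((e.ιL x • m) ⊗ₜ[k] n)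
        - p ⊗ₜ[k] (m ⊗ₜ[k] (e.ιL x • n)) ∈ relP_MN k A L U P M N e := by
    intro x p m n
    exact Submodule.subset_span (Or.inr ⟨x, p, m, n, rfl⟩)
  have hc : relP_MN k A L U P M N e ≤ (relPM_N k A L U P M N e).comap F := by
    rw [relP_MN, Submodule.span_le]
    rintro z ((⟨a, p, m, n, rfl⟩ | ⟨a, p, m, n, rfl⟩) | ⟨x, p, m, n, rfl⟩) <;>
      simp only [SetLike.mem_coe, Submodule.mem_comap, map_sub, hFt]
    · rw [hPA]; exact mem1 a p m n
    · have h : (p ⊗ₜ[k] (a • m)) ⊗ₜ[k] n - (p ⊗ₜ[k] m) ⊗ₜ[k] (a • n)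
          = (((a • p) ⊗ₜ[k] m) ⊗ₜ[k] n - (p ⊗ₜ[k] m) ⊗ₜ[k] (a • n))
            - (((a • p) ⊗ₜ[k] m) ⊗ₜ[k] n - (p ⊗ₜ[k] (a • m)) ⊗ₜ[k] n) := by abel
      rw [h]; exact sub_mem (mem2 a p m n) (mem1 a p m n)
    · exact mem3 x p m n
  have hc' : relPM_N k A L U P M N e ≤ (relP_MN k A L U P M N e).comap G := by
    rw [relPM_N, Submodule.span_le]
    rintro z ((⟨a, p, m, n, rfl⟩ | ⟨a, p, m, n, rfl⟩) | ⟨x, p, m, n, rfl⟩) <;>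
      simp only [SetLike.mem_coe, Submodule.mem_comap, map_sub, hGt]
    · rw [← hPA]; exact mem1' a p m n
    · rw [← hPA]
      have h : (op (e.ιA a) • p) ⊗ₜ[k] (m ⊗ₜ[k] n) - p ⊗ₜ[k] (m ⊗ₜ[k] (a • n))
          = ((op (e.ιA a) • p) ⊗ₜ[k] (m ⊗ₜ[k] n) - p ⊗ₜ[k] ((a • m) ⊗ₜ[k] n))
            + (p ⊗ₜ[k] ((a • m) ⊗ₜ[k] n) - p ⊗ₜ[k] (m ⊗ₜ[k] (a • n))) := by abel
      rw [h]; exact add_mem (mem1' a p m n) (mem2' a p m n)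
    · exact mem3' x p m n
  refine ⟨F, hc, ?_, ?_, ?_⟩
  · intro p m n
    rw [hFt, sub_self]
    exact Submodule.zero_mem _
  · -- injective
    rw [← LinearMap.ker_eq_bot, LinearMap.ker_eq_bot']
    intro q hq
    obtain ⟨z, rfl⟩ := Submodule.Quotient.mk_surjective _ q
    rw [Submodule.mapQ_apply, Submodule.Quotient.mk_eq_zero] at hq
    rw [Submodule.Quotient.mk_eq_zero]
    have := hc' hq
    rw [Submodule.mem_comap] at this
    have hz : G (F z) = z := by
      simp [hF, hG]
    rwa [hz] at this
  · -- surjective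
    intro q
    obtain ⟨w, rfl⟩ := Submodule.Quotient.mk_surjective _ q
    refine ⟨Submodule.Quotient.mk (G w), ?_⟩
    rw [Submodule.mapQ_apply]
    congr 1
    simp [hF, hG]
end

section
/- Let D_{X,p} be the ring of germs at p of holomorphic differential operators on a complex manifold X, with its order filtration and associated graded ring Gr D_{X,p} (a polynomial ring over O_{X,p}). Let I be a left ideal of D_{X,p} generated by operators P₁,…,P_t of order ≤ 1 such that (i) the symbols σ(P₁),…,σ(P_t) form a regular sequence in Gr D_{X,p}, and (ii) [P_i,P_j] ∈ Σ_k O_{X,p} P_k for all 1 ≤ i,j ≤ t. Then σ(I) = Gr D_{X,p}·(σ(P₁),…,σ(P_t)), i.e., the ideal of symbols of I is generated by the symbols of the P_i. -/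
open scoped TensorProduct
open MulOpposite

section Auxiliary

/-- Syzygy lemma: any relation on a weakly regular sequence is a combination of the
"trivial" (Koszul) relations, expressed here in the form
`g i = ∑ j, u i j * r j - ∑ j, u j i * r j`. -/
lemma syzygy_aux {R : Type} [CommRing R] : ∀ (n : ℕ) (r : Fin n → R),
    RingTheory.Sequence.IsWeaklyRegular R (List.ofFn r) →
    ∀ g : Fin n → R, ∑ i, g i * r i = 0 →
    ∃ u : Fin n → Fin n → R,
      ∀ i, g i = (∑ j, u i j * r j) - (∑ j, u j i * r j) := by
  intro n
  induction n with
  | zero => exact fun r _ g _ => ⟨0, fun i => i.elim0⟩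
  | succ n IH =>
    intro r hreg g hrel
    rw [List.ofFn_succ', List.concat_eq_append,
      RingTheory.Sequence.isWeaklyRegular_append_iff] at hreg
    obtain ⟨h1, h2⟩ := hreg
    rw [RingTheory.Sequence.isWeaklyRegular_singleton_iff] at h2
    -- the ideal generated by the first n elements
    set J : Ideal R := Ideal.span (Set.range fun i : Fin n => r i.castSucc) with hJ
    have hofList : Ideal.ofList (List.ofFn fun i : Fin n => r i.castSucc) = J := by
      rw [hJ, Ideal.ofList]
      congr 1
      ext x
      rw [Set.mem_setOf_eq, List.mem_ofFn]
      exact Iff.rfl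
    have hsmultop : (Ideal.ofList (List.ofFn fun i : Fin n => r i.castSucc) •
        (⊤ : Submodule R R)) = J := by
      rw [hofList, hJ, Submodule.span_smul_eq, Submodule.set_smul_top_eq_span]
    -- g last * r last ∈ J
    rw [Fin.sum_univ_castSucc] at hrel
    have hmem : g (Fin.last n) * r (Fin.last n) ∈ J := by
      have : g (Fin.last n) * r (Fin.last n)
          = - ∑ i : Fin n, g i.castSucc * r i.castSucc := by linear_combination hrel
      rw [this]
      exact neg_mem (Ideal.sum_mem _ fun i _ =>
        Ideal.mul_mem_left _ _ (Ideal.subset_span ⟨i, rfl⟩))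
    have hglast : g (Fin.last n) ∈ J := by
      have h0 : r (Fin.last n) • Submodule.Quotient.mk (p := Ideal.ofList
          (List.ofFn fun i : Fin n => r i.castSucc) • (⊤ : Submodule R R)) (g (Fin.last n))
          = 0 := by
        rw [← Submodule.Quotient.mk_smul, Submodule.Quotient.mk_eq_zero, hsmultop]
        rw [smul_eq_mul, mul_comm]
        exact hmem
      have h0' := h2 (a₁ := Submodule.Quotient.mk (g (Fin.last n))) (a₂ := 0)
        (by simpa using h0)
      rwa [Submodule.Quotient.mk_eq_zero, hsmultop] at h0'
    obtain ⟨a, ha⟩ := (Submodule.mem_span_range_iff_exists_fun R).mp hglast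
    -- the truncated relation
    have hrel' : ∑ i : Fin n, (g i.castSucc + a i * r (Fin.last n)) * r i.castSucc = 0 := by
      simp only [add_mul, Finset.sum_add_distrib]
      have : ∑ i : Fin n, a i * r (Fin.last n) * r i.castSucc
          = (∑ i : Fin n, a i • r i.castSucc) * r (Fin.last n) := by
        rw [Finset.sum_mul]; congr 1; ext i; simp [smul_eq_mul]; ring
      rw [this, ha]
      linear_combination hrel
    obtain ⟨u', hu'⟩ := IH _ h1 _ hrel'
    refine ⟨Fin.snoc (fun i => Fin.snoc (u' i) (-(a i))) 0, fun i => ?_⟩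
    refine Fin.lastCases ?_ (fun i => ?_) i
    · simp only [Fin.snoc_last, Pi.zero_apply, zero_mul, Finset.sum_const_zero, zero_sub]
      rw [Fin.sum_univ_castSucc]
      simp only [Fin.snoc_castSucc, Fin.snoc_last]
      rw [← ha]
      simp [smul_eq_mul]
    · rw [Fin.sum_univ_castSucc, Fin.sum_univ_castSucc]
      simp only [Fin.snoc_castSucc, Fin.snoc_last, Pi.zero_apply, zero_mul, add_zero]
      have := hu' i
      linear_combination this

attribute [local instance] MvPolynomial.gradedAlgebra

lemma hc_decompose {σv O : Type} [CommRing O] (p : MvPolynomial σv O) (n : ℕ) :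
    (DirectSum.decompose (MvPolynomial.homogeneousSubmodule σv O) p n : MvPolynomial σv O)
      = MvPolynomial.homogeneousComponent n p :=
  MvPolynomial.decomposition.decompose'_apply p n

lemma hc_mul_right {σv O : Type} [CommRing O] {q : MvPolynomial σv O}
    (hq : q ∈ MvPolynomial.homogeneousSubmodule σv O 1) (p : MvPolynomial σv O) (n : ℕ) :
    MvPolynomial.homogeneousComponent (n + 1) (p * q)
      = MvPolynomial.homogeneousComponent n p * q := by
  have := DirectSum.coe_decompose_mul_add_of_right_mem
    (𝒜 := MvPolynomial.homogeneousSubmodule σv O) (i := n) (j := 1) (a := p) hq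
  rwa [hc_decompose, hc_decompose] at this

lemma hc_mul_right_zero {σv O : Type} [CommRing O] {q : MvPolynomial σv O}
    (hq : q ∈ MvPolynomial.homogeneousSubmodule σv O 1) (p : MvPolynomial σv O) :
    MvPolynomial.homogeneousComponent 0 (p * q) = 0 := by
  have := DirectSum.coe_decompose_mul_of_right_mem_of_not_le
    (𝒜 := MvPolynomial.homogeneousSubmodule σv O) (n := 0) (a := p) hq (by norm_num)
  rwa [hc_decompose] at this

/-- Graded syzygy lemma (positive degree). -/
lemma syzygy_graded {σv O : Type} [CommRing O] (t : ℕ) (r : Fin t → MvPolynomial σv O)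
    (hr : ∀ i, r i ∈ MvPolynomial.homogeneousSubmodule σv O 1)
    (hreg : RingTheory.Sequence.IsWeaklyRegular (MvPolynomial σv O) (List.ofFn r))
    (d : ℕ) (g : Fin t → MvPolynomial σv O)
    (hg : ∀ i, g i ∈ MvPolynomial.homogeneousSubmodule σv O (d + 1))
    (hrel : ∑ i, g i * r i = 0) :
    ∃ u : Fin t → Fin t → MvPolynomial σv O,
      (∀ i j, u i j ∈ MvPolynomial.homogeneousSubmodule σv O d) ∧
      ∀ i, g i = (∑ j, u i j * r j) - (∑ j, u j i * r j) := by
  obtain ⟨u, hu⟩ := syzygy_aux t r hreg g hrel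
  refine ⟨fun i j => MvPolynomial.homogeneousComponent d (u i j),
    fun i j => MvPolynomial.homogeneousComponent_mem d _, fun i => ?_⟩
  have h := congrArg (MvPolynomial.homogeneousComponent (d + 1)) (hu i)
  rw [MvPolynomial.homogeneousComponent_of_mem (hg i), if_pos rfl, map_sub,
    map_sum, map_sum] at h
  rw [h]
  congr 1 <;> exact Finset.sum_congr rfl fun j _ => hc_mul_right (hr j) _ d

/-- Graded syzygy lemma (degree zero): a relation with degree-zero coefficients is trivial. -/
lemma syzygy_graded_zero {σv O : Type} [CommRing O] (t : ℕ) (r : Fin t → MvPolynomial σv O)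
    (hr : ∀ i, r i ∈ MvPolynomial.homogeneousSubmodule σv O 1)
    (hreg : RingTheory.Sequence.IsWeaklyRegular (MvPolynomial σv O) (List.ofFn r))
    (g : Fin t → MvPolynomial σv O)
    (hg : ∀ i, g i ∈ MvPolynomial.homogeneousSubmodule σv O 0)
    (hrel : ∑ i, g i * r i = 0) : ∀ i, g i = 0 := by
  obtain ⟨u, hu⟩ := syzygy_aux t r hreg g hrel
  intro i
  have h := congrArg (MvPolynomial.homogeneousComponent 0) (hu i)
  rw [MvPolynomial.homogeneousComponent_of_mem (hg i), if_pos rfl, map_sub,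
    map_sum, map_sum] at h
  rw [h]
  rw [Finset.sum_eq_zero fun j _ => hc_mul_right_zero (hr j) _,
    Finset.sum_eq_zero fun j _ => hc_mul_right_zero (hr j) _, sub_zero]

end Auxiliary

/-- An abstract version of the symbol-ideal theorem for the ring
`D = D_{X,p}` of germs of differential operators (more generally, for a filtered ring
whose associated graded ring is a commutative polynomial ring over `O = O_{X,p}`).

`D` is a ring with an exhaustive multiplicative filtration `F`, `ι : O → D` identifies
`O` with `F 0`, and the graded ring is realized as a polynomial ring
`G = O[σ]` via symbol maps `smap m : F m →+ G` (additive, multiplicative,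
homogeneous of degree `m`, vanishing exactly on `F (m−1)`, surjecting onto the
homogeneous parts).  Let `I` be the left ideal of `D` generated by operators
`P₁, …, P_t` of order `≤ 1` such that (i) the symbols `σ(P₁), …, σ(P_t)` form a
regular sequence in `G`, and (ii) `[P_i, P_j] ∈ Σ_l O·P_l` for all `i, j`.  Then
`σ(I) = G·(σ(P₁), …, σ(P_t))`, i.e. the ideal of symbols of elements of `I` is
generated by the symbols of the `P_i`. -/
theorem symbol_ideal_of_order_one_generators
    (O D G' : Type) (σv : Type) [CommRing O] [Ring D]
    (ι : O →+* D) (F : ℕ → AddSubgroup D)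
    -- the filtration :
    (hmono : ∀ m, F m ≤ F (m + 1))
    (hexh : ∀ Q : D, ∃ m, Q ∈ F m)
    (hF0 : ∀ o : O, ι o ∈ F 0)
    (hF0' : ∀ Q ∈ F 0, ∃ o : O, Q = ι o)
    (hmul : ∀ (m m' : ℕ) (P Q : D), P ∈ F m → Q ∈ F m' → P * Q ∈ F (m + m'))
    -- the associated graded ring, realized as the polynomial ring `O[σv]` via the
    -- principal-symbol maps `smap` :
    (smap : ∀ m : ℕ, F m →+ MvPolynomial σv O)
    (hvanish0 : ∀ P : F 0, smap 0 P = 0 ↔ (P : D) = 0)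
    (hvanish : ∀ (m : ℕ) (P : F (m + 1)), smap (m + 1) P = 0 ↔ (P : D) ∈ F m)
    (hhomog : ∀ (m : ℕ) (P : F m),
      smap m P ∈ MvPolynomial.homogeneousSubmodule σv O m)
    (hsmul : ∀ (m m' : ℕ) (P : F m) (Q : F m'),
      smap (m + m') ⟨(P : D) * (Q : D), hmul m m' P Q P.2 Q.2⟩ = smap m P * smap m' Q)
    (hsC : ∀ o : O, smap 0 ⟨ι o, hF0 o⟩ = MvPolynomial.C o)
    (hssurj : ∀ (m : ℕ) (g : MvPolynomial σv O),
      g ∈ MvPolynomial.homogeneousSubmodule σv O m → ∃ P : F m, smap m P = g)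
    -- the operators `P₁, …, P_t`, of order `≤ 1` :
    (t : ℕ) (Pop : Fin t → D) (hP : ∀ i, Pop i ∈ F 1)
    -- (i) their symbols form a regular sequence in the graded ring :
    (hreg : RingTheory.Sequence.IsRegular (MvPolynomial σv O)
      (List.ofFn fun i => smap 1 ⟨Pop i, hP i⟩))
    -- (ii) the commutators `[P_i, P_j]` lie in `Σ_l O·P_l` :
    (hcomm : ∀ i j, ∃ c : Fin t → O,
      Pop i * Pop j - Pop j * Pop i = ∑ l, ι (c l) * Pop l) :
    Ideal.span {g : MvPolynomial σv O | ∃ (m : ℕ) (Q : D) (hQ : Q ∈ F m),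
        Q ∈ Submodule.span D (Set.range Pop) ∧ g = smap m ⟨Q, hQ⟩} =
      Ideal.span (Set.range fun i => smap 1 ⟨Pop i, hP i⟩) := by
  classical
  set σP : Fin t → MvPolynomial σv O := fun i => smap 1 ⟨Pop i, hP i⟩ with hσP
  set J : Ideal (MvPolynomial σv O) := Ideal.span (Set.range σP) with hJdef
  have hFmono : ∀ {a b : ℕ}, a ≤ b → F a ≤ F b :=
    fun {a b} h => monotone_nat_of_le_succ hmono h
  choose cc hcc using hcomm
  -- the symbol of a product representation
  have hprod : ∀ (d : ℕ) (A : Fin t → D) (hA : ∀ i, A i ∈ F d) (Q : F (d + 1)),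
      (Q : D) = ∑ i, A i * Pop i →
      smap (d + 1) Q = ∑ i, smap d ⟨A i, hA i⟩ * σP i := by
    intro d A hA Q hQ
    have hQ' : Q = ∑ i, (⟨A i * Pop i, hmul d 1 _ _ (hA i) (hP i)⟩ : F (d + 1)) := by
      apply Subtype.ext
      rw [hQ, AddSubmonoidClass.coe_finset_sum]
    rw [hQ', map_sum]
    exact Finset.sum_congr rfl fun i _ => hsmul d 1 ⟨A i, hA i⟩ ⟨Pop i, hP i⟩
  -- vanishing of too-high symbols
  have hvanish_low : ∀ (m k : ℕ) (Q : F m), (Q : D) ∈ F k → k + 1 ≤ m → smap m Q = 0 := by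
    intro m k Q hk hkm
    obtain ⟨m', rfl⟩ : ∃ m', m = m' + 1 := ⟨m - 1, by omega⟩
    exact (hvanish m' Q).mpr (hFmono (by omega) hk)
  -- the easy case : `m ≥ d + 1`
  have direct : ∀ (d : ℕ) (A : Fin t → D), (∀ i, A i ∈ F d) → ∀ (m : ℕ) (Q : F m),
      (Q : D) = ∑ i, A i * Pop i → d + 1 ≤ m → smap m Q ∈ J := by
    intro d A hA m Q hQ hm
    rcases eq_or_lt_of_le hm with h | h
    · subst h
      rw [hprod d A hA Q hQ]
      exact Ideal.sum_mem _ fun i _ => Ideal.mul_mem_left _ _ (Ideal.subset_span ⟨i, rfl⟩)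
    · have hQF : (Q : D) ∈ F (d + 1) := by
        rw [hQ]
        exact sum_mem fun i _ => hmul d 1 _ _ (hA i) (hP i)
      rw [hvanish_low m (d + 1) Q hQF h]
      exact J.zero_mem
  -- the key induction
  have key : ∀ (d : ℕ) (A : Fin t → D), (∀ i, A i ∈ F d) → ∀ (m : ℕ) (Q : F m),
      (Q : D) = ∑ i, A i * Pop i → smap m Q ∈ J := by
    intro d
    induction d with
    | zero =>
      intro A hA m Q hQ
      rcases Nat.lt_or_ge m 1 with hm | hm
      swap
      · exact direct 0 A hA m Q hQ hm
      obtain rfl : m = 0 := by omega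
      have hQF1 : (Q : D) ∈ F 1 := by
        rw [hQ]
        exact sum_mem fun i _ => hmul 0 1 _ _ (hA i) (hP i)
      have h0 : smap 1 ⟨(Q : D), hQF1⟩ = 0 := (hvanish 0 _).mpr Q.2
      have hrel : ∑ i, smap 0 ⟨A i, hA i⟩ * σP i = 0 := by
        rw [← hprod 0 A hA ⟨(Q : D), hQF1⟩ hQ]
        exact h0
      have hgz := syzygy_graded_zero t σP (fun i => hhomog 1 _) hreg.toIsWeaklyRegular
        (fun i => smap 0 ⟨A i, hA i⟩) (fun i => hhomog 0 _) hrel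
      have hAz : ∀ i, A i = 0 := fun i => (hvanish0 ⟨A i, hA i⟩).mp (hgz i)
      have hQz : Q = 0 := by
        apply Subtype.ext
        rw [hQ]
        simp [hAz]
      rw [hQz, map_zero]
      exact J.zero_mem
    | succ d ih =>
      intro A hA m Q hQ
      rcases Nat.lt_or_ge m (d + 2) with hm | hm
      swap
      · exact direct (d + 1) A hA m Q hQ hm
      have hQF : (Q : D) ∈ F (d + 2) := by
        rw [hQ]
        exact sum_mem fun i _ => hmul (d + 1) 1 _ _ (hA i) (hP i)
      have h0 : smap (d + 2) ⟨(Q : D), hQF⟩ = 0 :=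
        (hvanish (d + 1) _).mpr (hFmono (by omega) Q.2)
      have hrel : ∑ i, smap (d + 1) ⟨A i, hA i⟩ * σP i = 0 := by
        rw [← hprod (d + 1) A hA ⟨(Q : D), hQF⟩ hQ]
        exact h0
      obtain ⟨u, humem, hu⟩ := syzygy_graded t σP (fun i => hhomog 1 _)
        hreg.toIsWeaklyRegular d (fun i => smap (d + 1) ⟨A i, hA i⟩)
        (fun i => hhomog (d + 1) _) hrel
      choose U hU using fun i j => hssurj d (u i j) (humem i j)
      set T : Fin t → F (d + 1) := fun i => ⟨A i, hA i⟩ -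
        ∑ j, ((⟨(U i j : D) * Pop j, hmul d 1 _ _ (U i j).2 (hP j)⟩ : F (d + 1))
            - (⟨(U j i : D) * Pop j, hmul d 1 _ _ (U j i).2 (hP j)⟩ : F (d + 1))) with hT
      have hTcoe : ∀ i, (T i : D)
          = A i - ∑ j, ((U i j : D) * Pop j - (U j i : D) * Pop j) := by
        intro i
        rw [hT]
        push_cast
        rfl
      have hTsymb : ∀ i, smap (d + 1) (T i) = 0 := by
        intro i
        rw [hT]
        simp only [map_sub, map_sum]
        have hterm : ∀ a b j : Fin t,
            smap (d + 1) (⟨(U a b : D) * Pop j, hmul d 1 _ _ (U a b).2 (hP j)⟩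
              : F (d + 1)) = u a b * σP j := by
          intro a b j
          rw [hsmul d 1 (U a b) ⟨Pop j, hP j⟩, hU a b]
        simp only [hterm]
        rw [hu i]
        rw [Finset.sum_sub_distrib]
        abel
      have hTF : ∀ i, (T i : D) ∈ F d := fun i => (hvanish d (T i)).mp (hTsymb i)
      set B : Fin t → D := fun l => (T l : D) - ∑ i, ∑ j, (U i j : D) * ι (cc i j l)
        with hB
      have hBF : ∀ l, B l ∈ F d := by
        intro l
        exact sub_mem (hTF l) (sum_mem fun i _ => sum_mem fun j _ =>
          hmul d 0 _ _ (U i j).2 (hF0 _))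
      have hQB : (Q : D) = ∑ l, B l * Pop l := by
        have h1 : ∀ l, B l * Pop l = A l * Pop l
            - (∑ j, ((U l j : D) * (Pop j * Pop l) - (U j l : D) * (Pop j * Pop l)))
            - ∑ i, ∑ j, (U i j : D) * (ι (cc i j l) * Pop l) := by
          intro l
          rw [hB]
          simp only [hTcoe, sub_mul, Finset.sum_mul, mul_assoc]
        have e2 : ∑ l, ∑ i, ∑ j, (U i j : D) * (ι (cc i j l) * Pop l)
            = ∑ i, ∑ j, (U i j : D) * (Pop i * Pop j - Pop j * Pop i) := by
          rw [Finset.sum_comm]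
          refine Finset.sum_congr rfl fun i _ => ?_
          rw [Finset.sum_comm]
          refine Finset.sum_congr rfl fun j _ => ?_
          rw [← Finset.mul_sum, ← hcc i j]
        have e1 : ∑ l, ∑ j, ((U l j : D) * (Pop j * Pop l) - (U j l : D) * (Pop j * Pop l))
            = - ∑ i, ∑ j, (U i j : D) * (Pop i * Pop j - Pop j * Pop i) := by
          simp only [Finset.sum_sub_distrib, mul_sub]
          rw [neg_sub]
          congr 1
          rw [Finset.sum_comm]
        rw [hQ]
        simp only [h1]
        rw [Finset.sum_sub_distrib, Finset.sum_sub_distrib, e1, e2]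
        abel
      exact ih B hBF m Q hQB
  -- conclusion
  apply le_antisymm
  · rw [Ideal.span_le]
    rintro g ⟨m, Q, hQm, hQspan, rfl⟩
    obtain ⟨A, hA⟩ := (Submodule.mem_span_range_iff_exists_fun D).mp hQspan
    choose deg hdeg using fun i => hexh (A i)
    have hAd : ∀ i, A i ∈ F (Finset.univ.sup deg) :=
      fun i => hFmono (Finset.le_sup (Finset.mem_univ i)) (hdeg i)
    refine key _ A hAd m ⟨Q, hQm⟩ ?_
    show Q = _
    rw [← hA]
    exact Finset.sum_congr rfl fun i _ => smul_eq_mul _ _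
  · rw [Ideal.span_le]
    rintro g ⟨i, rfl⟩
    exact Ideal.subset_span ⟨1, Pop i, hP i,
      Submodule.subset_span (Set.mem_range_self i), rfl⟩
end
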